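/- arXiv:2011.01572 — 2 statements merged into one kernel-verified Lean document; each statement's English description precedes it below -/
import Mathlib

section
/- The assignments W_{-k} ↦ W_{k+1}, W_{k+1} ↦ W_{-k}, G_{k+1} ↦ G̃_{k+1}, G̃_{k+1} ↦ G_{k+1} (k ∈ ℕ) extend to an F-algebra automorphism σ of 𝒜q, and the assignments W_{-k} ↦ W_{-k}, W_{k+1} ↦ W_{k+1}, G_{k+1} ↦ G̃_{k+1}, G̃_{k+1} ↦ G_{k+1} extend to an F-algebra antiautomorphism S of 𝒜q (an F-linear bijection with S(1) = 1 and S(xy) = S(y)S(x) for all x, y). -/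
/- STATEMENT 2: the automorphism σ and the antiautomorphism S of 𝒜q. -/

noncomputable section

namespace Alt

/-- The base field `F = ℚ(q)`. -/
abbrev F : Type := RatFunc ℚ

/-- The indeterminate `q`. -/
def q : F := RatFunc.X

/-- Commutator `[x,y] = xy - yx`. -/
def br {A : Type*} [Ring A] (x y : A) : A := x * y - y * x

/-- `q`-commutator `[x,y]_q = q·xy - q⁻¹·yx`. -/
def qbr {A : Type*} [Ring A] [Algebra F A] (x y : A) : A :=
  q • (x * y) - q⁻¹ • (y * x)

/-- `q⁻¹`-commutator `[x,y]_{q⁻¹} = q⁻¹·xy - q·yx`. -/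
def qbr' {A : Type*} [Ring A] [Algebra F A] (x y : A) : A :=
  q⁻¹ • (x * y) - q • (y * x)

/-- Generators of the algebra `𝒜q`: `wm k ↦ W_{-k}`, `wp k ↦ W_{k+1}`,
`g k ↦ G_{k+1}`, `gt k ↦ G̃_{k+1}`. -/
inductive Gen : Type
  | wm : ℕ → Gen
  | wp : ℕ → Gen
  | g : ℕ → Gen
  | gt : ℕ → Gen

/-- The free `F`-algebra on the generators. -/
abbrev FA : Type := FreeAlgebra F Gen

/-- `W_{-k}` in the free algebra. -/
def fWm (k : ℕ) : FA := FreeAlgebra.ι F (Gen.wm k)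
/-- `W_{k+1}` in the free algebra. -/
def fWp (k : ℕ) : FA := FreeAlgebra.ι F (Gen.wp k)
/-- `G_{k+1}` in the free algebra. -/
def fG (k : ℕ) : FA := FreeAlgebra.ι F (Gen.g k)
/-- `G̃_{k+1}` in the free algebra. -/
def fGt (k : ℕ) : FA := FreeAlgebra.ι F (Gen.gt k)

/-- The defining relations of `𝒜q` (with parameter `ρ`). -/
inductive rel (ρ : F) : FA → FA → Prop
  | r1a (k : ℕ) : rel ρ (br (fWm 0) (fWp k)) ((q + q⁻¹)⁻¹ • (fGt k - fG k))
  | r1b (k : ℕ) : rel ρ (br (fWm k) (fWp 0)) ((q + q⁻¹)⁻¹ • (fGt k - fG k))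
  | r2a (k : ℕ) : rel ρ (qbr (fWm 0) (fG k)) (ρ • fWm (k + 1))
  | r2b (k : ℕ) : rel ρ (qbr (fGt k) (fWm 0)) (ρ • fWm (k + 1))
  | r3a (k : ℕ) : rel ρ (qbr (fG k) (fWp 0)) (ρ • fWp (k + 1))
  | r3b (k : ℕ) : rel ρ (qbr (fWp 0) (fGt k)) (ρ • fWp (k + 1))
  | r4a (k l : ℕ) : rel ρ (br (fWm k) (fWm l)) 0
  | r4b (k l : ℕ) : rel ρ (br (fWp k) (fWp l)) 0
  | r5 (k l : ℕ) : rel ρ (br (fWm k) (fWp l) + br (fWp k) (fWm l)) 0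
  | r6 (k l : ℕ) : rel ρ (br (fWm k) (fG l) + br (fG k) (fWm l)) 0
  | r7 (k l : ℕ) : rel ρ (br (fWm k) (fGt l) + br (fGt k) (fWm l)) 0
  | r8 (k l : ℕ) : rel ρ (br (fWp k) (fG l) + br (fG k) (fWp l)) 0
  | r9 (k l : ℕ) : rel ρ (br (fWp k) (fGt l) + br (fGt k) (fWp l)) 0
  | r10a (k l : ℕ) : rel ρ (br (fG k) (fG l)) 0
  | r10b (k l : ℕ) : rel ρ (br (fGt k) (fGt l)) 0
  | r11 (k l : ℕ) : rel ρ (br (fGt k) (fG l) + br (fG k) (fGt l)) 0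

/-- The algebra `𝒜q`: the quotient of the free algebra by the two-sided ideal
generated by the defining relations. -/
abbrev Aq (ρ : F) : Type := RingQuot (rel ρ)

/-- The generator `W_{-k}` of `𝒜q`. -/
def Wm (ρ : F) (k : ℕ) : Aq ρ := RingQuot.mkAlgHom F (rel ρ) (fWm k)
/-- The generator `W_{k+1}` of `𝒜q`. -/
def Wp (ρ : F) (k : ℕ) : Aq ρ := RingQuot.mkAlgHom F (rel ρ) (fWp k)
/-- The generator `G_{k+1}` of `𝒜q`. -/
def G (ρ : F) (k : ℕ) : Aq ρ := RingQuot.mkAlgHom F (rel ρ) (fG k)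
/-- The generator `G̃_{k+1}` of `𝒜q`. -/
def Gt (ρ : F) (k : ℕ) : Aq ρ := RingQuot.mkAlgHom F (rel ρ) (fGt k)

/-
`σ` and `S` are defined on the generators of the free algebra, `S` as a homomorphism into the
opposite algebra, where `[x, y]` and `[x, y]_q` reverse their arguments. Each defining relation
is sent to another one, possibly with the two sides of a bracket swapped, so both maps descend to
`𝒜q`; both are involutions, as one checks on generators, hence bijective.
-/

open MulOpposite

theorem br_swap {A : Type*} [Ring A] (x y : A) : br x y = -br y x := by
  simp [br]

theorem br_swap_eq_smul_sub {R A : Type*} [Ring A] [Monoid R] [DistribMulAction R A]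
    {a b u v : A} {c : R} (h : br a b = c • (u - v)) : br b a = c • (v - u) := by
  rw [br_swap, h, ← smul_neg, neg_sub]

@[simp] theorem map_br {A B : Type*} [Ring A] [Ring B] [Algebra F A] [Algebra F B]
    (f : A →ₐ[F] B) (x y : A) : f (br x y) = br (f x) (f y) := by
  simp [br]

@[simp] theorem map_qbr {A B : Type*} [Ring A] [Ring B] [Algebra F A] [Algebra F B]
    (f : A →ₐ[F] B) (x y : A) : f (qbr x y) = qbr (f x) (f y) := by
  simp [qbr]

@[simp] theorem br_op {A : Type*} [Ring A] (x y : A) : br (op x) (op y) = op (br y x) := by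
  simp [br, ← op_mul, ← op_sub]

@[simp] theorem qbr_op {A : Type*} [Ring A] [Algebra F A] (x y : A) :
    qbr (op x) (op y) = op (qbr y x) := by
  simp [qbr, ← op_mul, ← op_smul, ← op_sub]

section Relations

variable (ρ : F)

theorem br_Wm_zero_Wp (k : ℕ) : br (Wm ρ 0) (Wp ρ k) = (q + q⁻¹)⁻¹ • (Gt ρ k - G ρ k) := by
  simpa [Wm, Wp, G, Gt] using RingQuot.mkAlgHom_rel F (rel.r1a (ρ := ρ) k)

theorem br_Wm_Wp_zero (k : ℕ) : br (Wm ρ k) (Wp ρ 0) = (q + q⁻¹)⁻¹ • (Gt ρ k - G ρ k) := by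
  simpa [Wm, Wp, G, Gt] using RingQuot.mkAlgHom_rel F (rel.r1b (ρ := ρ) k)

theorem qbr_Wm_zero_G (k : ℕ) : qbr (Wm ρ 0) (G ρ k) = ρ • Wm ρ (k + 1) := by
  simpa [Wm, G] using RingQuot.mkAlgHom_rel F (rel.r2a (ρ := ρ) k)

theorem qbr_Gt_Wm_zero (k : ℕ) : qbr (Gt ρ k) (Wm ρ 0) = ρ • Wm ρ (k + 1) := by
  simpa [Wm, Gt] using RingQuot.mkAlgHom_rel F (rel.r2b (ρ := ρ) k)

theorem qbr_G_Wp_zero (k : ℕ) : qbr (G ρ k) (Wp ρ 0) = ρ • Wp ρ (k + 1) := by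
  simpa [Wp, G] using RingQuot.mkAlgHom_rel F (rel.r3a (ρ := ρ) k)

theorem qbr_Wp_zero_Gt (k : ℕ) : qbr (Wp ρ 0) (Gt ρ k) = ρ • Wp ρ (k + 1) := by
  simpa [Wp, Gt] using RingQuot.mkAlgHom_rel F (rel.r3b (ρ := ρ) k)

theorem br_Wm_Wm (k l : ℕ) : br (Wm ρ k) (Wm ρ l) = 0 := by
  simpa [Wm] using RingQuot.mkAlgHom_rel F (rel.r4a (ρ := ρ) k l)

theorem br_Wp_Wp (k l : ℕ) : br (Wp ρ k) (Wp ρ l) = 0 := by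
  simpa [Wp] using RingQuot.mkAlgHom_rel F (rel.r4b (ρ := ρ) k l)

theorem br_Wm_Wp_add_br_Wp_Wm (k l : ℕ) :
    br (Wm ρ k) (Wp ρ l) + br (Wp ρ k) (Wm ρ l) = 0 := by
  simpa [Wm, Wp] using RingQuot.mkAlgHom_rel F (rel.r5 (ρ := ρ) k l)

theorem br_Wm_G_add_br_G_Wm (k l : ℕ) : br (Wm ρ k) (G ρ l) + br (G ρ k) (Wm ρ l) = 0 := by
  simpa [Wm, G] using RingQuot.mkAlgHom_rel F (rel.r6 (ρ := ρ) k l)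

theorem br_Wm_Gt_add_br_Gt_Wm (k l : ℕ) :
    br (Wm ρ k) (Gt ρ l) + br (Gt ρ k) (Wm ρ l) = 0 := by
  simpa [Wm, Gt] using RingQuot.mkAlgHom_rel F (rel.r7 (ρ := ρ) k l)

theorem br_Wp_G_add_br_G_Wp (k l : ℕ) : br (Wp ρ k) (G ρ l) + br (G ρ k) (Wp ρ l) = 0 := by
  simpa [Wp, G] using RingQuot.mkAlgHom_rel F (rel.r8 (ρ := ρ) k l)

theorem br_Wp_Gt_add_br_Gt_Wp (k l : ℕ) :
    br (Wp ρ k) (Gt ρ l) + br (Gt ρ k) (Wp ρ l) = 0 := by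
  simpa [Wp, Gt] using RingQuot.mkAlgHom_rel F (rel.r9 (ρ := ρ) k l)

theorem br_G_G (k l : ℕ) : br (G ρ k) (G ρ l) = 0 := by
  simpa [G] using RingQuot.mkAlgHom_rel F (rel.r10a (ρ := ρ) k l)

theorem br_Gt_Gt (k l : ℕ) : br (Gt ρ k) (Gt ρ l) = 0 := by
  simpa [Gt] using RingQuot.mkAlgHom_rel F (rel.r10b (ρ := ρ) k l)

theorem br_Gt_G_add_br_G_Gt (k l : ℕ) : br (Gt ρ k) (G ρ l) + br (G ρ k) (Gt ρ l) = 0 := by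
  simpa [G, Gt] using RingQuot.mkAlgHom_rel F (rel.r11 (ρ := ρ) k l)

end Relations

namespace Aq

variable {ρ : F} {B : Type*} [Semiring B] [Algebra F B]

def lift (φ : Gen → B)
    (hφ : ∀ ⦃x y : FA⦄, rel ρ x y → FreeAlgebra.lift F φ x = FreeAlgebra.lift F φ y) :
    Aq ρ →ₐ[F] B :=
  RingQuot.liftAlgHom F ⟨FreeAlgebra.lift F φ, hφ⟩

section lift

variable (φ : Gen → B)
  (hφ : ∀ ⦃x y : FA⦄, rel ρ x y → FreeAlgebra.lift F φ x = FreeAlgebra.lift F φ y) (k : ℕ)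

@[simp] theorem lift_Wm : lift φ hφ (Wm ρ k) = φ (.wm k) := by
  simp [lift, Wm, fWm, RingQuot.liftAlgHom_mkAlgHom_apply]

@[simp] theorem lift_Wp : lift φ hφ (Wp ρ k) = φ (.wp k) := by
  simp [lift, Wp, fWp, RingQuot.liftAlgHom_mkAlgHom_apply]

@[simp] theorem lift_G : lift φ hφ (G ρ k) = φ (.g k) := by
  simp [lift, G, fG, RingQuot.liftAlgHom_mkAlgHom_apply]

@[simp] theorem lift_Gt : lift φ hφ (Gt ρ k) = φ (.gt k) := by
  simp [lift, Gt, fGt, RingQuot.liftAlgHom_mkAlgHom_apply]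

end lift

theorem algHom_ext {f g : Aq ρ →ₐ[F] B}
    (hWm : ∀ k, f (Wm ρ k) = g (Wm ρ k)) (hWp : ∀ k, f (Wp ρ k) = g (Wp ρ k))
    (hG : ∀ k, f (G ρ k) = g (G ρ k)) (hGt : ∀ k, f (Gt ρ k) = g (Gt ρ k)) : f = g := by
  refine RingQuot.ringQuot_ext' F f g (FreeAlgebra.hom_ext (funext fun x => ?_))
  cases x with
  | wm k => exact hWm k
  | wp k => exact hWp k
  | g k => exact hG k
  | gt k => exact hGt k

end Aq

section Sigma

variable (ρ : F)

def sigmaGen : Gen → Aq ρ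
  | .wm k => Wp ρ k
  | .wp k => Wm ρ k
  | .g k => Gt ρ k
  | .gt k => G ρ k

theorem sigmaGen_respects_rel ⦃x y : FA⦄ (h : rel ρ x y) :
    FreeAlgebra.lift F (sigmaGen ρ) x = FreeAlgebra.lift F (sigmaGen ρ) y := by
  induction h with simp only [map_br, map_qbr, map_smul, map_sub, map_add, map_zero,
    fWm, fWp, fG, fGt, FreeAlgebra.lift_ι_apply, sigmaGen]
  | r1a k => exact br_swap_eq_smul_sub (br_Wm_Wp_zero ρ k)
  | r1b k => exact br_swap_eq_smul_sub (br_Wm_zero_Wp ρ k)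
  | r2a k => exact qbr_Wp_zero_Gt ρ k
  | r2b k => exact qbr_G_Wp_zero ρ k
  | r3a k => exact qbr_Gt_Wm_zero ρ k
  | r3b k => exact qbr_Wm_zero_G ρ k
  | r4a k l => exact br_Wp_Wp ρ k l
  | r4b k l => exact br_Wm_Wm ρ k l
  | r5 k l => rw [add_comm]; exact br_Wm_Wp_add_br_Wp_Wm ρ k l
  | r6 k l => exact br_Wp_Gt_add_br_Gt_Wp ρ k l
  | r7 k l => exact br_Wp_G_add_br_G_Wp ρ k l
  | r8 k l => exact br_Wm_Gt_add_br_Gt_Wm ρ k l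
  | r9 k l => exact br_Wm_G_add_br_G_Wm ρ k l
  | r10a k l => exact br_Gt_Gt ρ k l
  | r10b k l => exact br_G_G ρ k l
  | r11 k l => rw [add_comm]; exact br_Gt_G_add_br_G_Gt ρ k l

def sigmaHom : Aq ρ →ₐ[F] Aq ρ :=
  Aq.lift (sigmaGen ρ) (sigmaGen_respects_rel ρ)

theorem sigmaHom_comp_sigmaHom : (sigmaHom ρ).comp (sigmaHom ρ) = AlgHom.id F (Aq ρ) := by
  apply Aq.algHom_ext <;> simp [sigmaHom, sigmaGen]

def sigmaEquiv : Aq ρ ≃ₐ[F] Aq ρ :=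
  AlgEquiv.ofAlgHom (sigmaHom ρ) (sigmaHom ρ) (sigmaHom_comp_sigmaHom ρ)
    (sigmaHom_comp_sigmaHom ρ)

end Sigma

section Antiautomorphism

variable (ρ : F)

def antiGen : Gen → (Aq ρ)ᵐᵒᵖ
  | .wm k => op (Wm ρ k)
  | .wp k => op (Wp ρ k)
  | .g k => op (Gt ρ k)
  | .gt k => op (G ρ k)

theorem antiGen_respects_rel ⦃x y : FA⦄ (h : rel ρ x y) :
    FreeAlgebra.lift F (antiGen ρ) x = FreeAlgebra.lift F (antiGen ρ) y := by
  induction h with simp only [map_br, map_qbr, map_smul, map_sub, map_add, map_zero,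
    fWm, fWp, fG, fGt, FreeAlgebra.lift_ι_apply, antiGen, br_op, qbr_op,
    ← op_sub, ← op_smul, ← op_add, op_inj, op_eq_zero_iff]
  | r1a k => exact br_swap_eq_smul_sub (br_Wm_zero_Wp ρ k)
  | r1b k => exact br_swap_eq_smul_sub (br_Wm_Wp_zero ρ k)
  | r2a k => exact qbr_Gt_Wm_zero ρ k
  | r2b k => exact qbr_Wm_zero_G ρ k
  | r3a k => exact qbr_Wp_zero_Gt ρ k
  | r3b k => exact qbr_G_Wp_zero ρ k
  | r4a k l => exact br_Wm_Wm ρ l k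
  | r4b k l => exact br_Wp_Wp ρ l k
  | r5 k l => rw [add_comm]; exact br_Wm_Wp_add_br_Wp_Wm ρ l k
  | r6 k l => rw [add_comm]; exact br_Wm_Gt_add_br_Gt_Wm ρ l k
  | r7 k l => rw [add_comm]; exact br_Wm_G_add_br_G_Wm ρ l k
  | r8 k l => rw [add_comm]; exact br_Wp_Gt_add_br_Gt_Wp ρ l k
  | r9 k l => rw [add_comm]; exact br_Wp_G_add_br_G_Wp ρ l k
  | r10a k l => exact br_Gt_Gt ρ l k
  | r10b k l => exact br_G_G ρ l k
  | r11 k l => exact br_Gt_G_add_br_G_Gt ρ l k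

def antiHom : Aq ρ →ₐ[F] (Aq ρ)ᵐᵒᵖ :=
  Aq.lift (antiGen ρ) (antiGen_respects_rel ρ)

theorem antiHom_op_comp_antiHom :
    (AlgHom.op (antiHom ρ)).comp (antiHom ρ) = (AlgEquiv.opOp F (Aq ρ)).toAlgHom := by
  apply Aq.algHom_ext <;> simp [antiHom, antiGen]

def antiEquiv : Aq ρ ≃ₗ[F] Aq ρ :=
  .ofInvolutive ((opLinearEquiv F).symm.toLinearMap ∘ₗ (antiHom ρ).toLinearMap) fun x => by
    simpa using congrArg (unop ∘ unop) (AlgHom.congr_fun (antiHom_op_comp_antiHom ρ) x)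

theorem antiEquiv_apply (x : Aq ρ) : antiEquiv ρ x = unop (antiHom ρ x) := rfl

end Antiautomorphism

theorem statement2_general (ρ : F) :
    (∃ σ : Aq ρ ≃ₐ[F] Aq ρ,
      (∀ k : ℕ, σ (Wm ρ k) = Wp ρ k) ∧ (∀ k : ℕ, σ (Wp ρ k) = Wm ρ k) ∧
      (∀ k : ℕ, σ (G ρ k) = Gt ρ k) ∧ (∀ k : ℕ, σ (Gt ρ k) = G ρ k)) ∧
    (∃ S : Aq ρ ≃ₗ[F] Aq ρ,
      S 1 = 1 ∧ (∀ x y : Aq ρ, S (x * y) = S y * S x) ∧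
      (∀ k : ℕ, S (Wm ρ k) = Wm ρ k) ∧ (∀ k : ℕ, S (Wp ρ k) = Wp ρ k) ∧
      (∀ k : ℕ, S (G ρ k) = Gt ρ k) ∧ (∀ k : ℕ, S (Gt ρ k) = G ρ k)) := by
  refine ⟨⟨sigmaEquiv ρ, ?_, ?_, ?_, ?_⟩, ⟨antiEquiv ρ, ?_, ?_, ?_, ?_, ?_, ?_⟩⟩ <;>
    simp [sigmaEquiv, sigmaHom, sigmaGen, antiEquiv_apply, antiHom, antiGen]

/-- There is an `F`-algebra automorphism `σ` of `𝒜q` with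
`σ(W_{-k}) = W_{k+1}`, `σ(W_{k+1}) = W_{-k}`, `σ(G_{k+1}) = G̃_{k+1}`,
`σ(G̃_{k+1}) = G_{k+1}`, and an `F`-linear antiautomorphism `S` (an `F`-linear
bijection with `S 1 = 1` and `S (xy) = S y * S x`) fixing `W_{-k}`, `W_{k+1}`
and exchanging `G_{k+1}` with `G̃_{k+1}`. -/
theorem statement2 (ρ : F) (hρ : ρ ≠ 0) :
    (∃ σ : Aq ρ ≃ₐ[F] Aq ρ,
      (∀ k : ℕ, σ (Wm ρ k) = Wp ρ k) ∧ (∀ k : ℕ, σ (Wp ρ k) = Wm ρ k) ∧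
      (∀ k : ℕ, σ (G ρ k) = Gt ρ k) ∧ (∀ k : ℕ, σ (Gt ρ k) = G ρ k)) ∧
    (∃ S : Aq ρ ≃ₗ[F] Aq ρ,
      S 1 = 1 ∧ (∀ x y : Aq ρ, S (x * y) = S y * S x) ∧
      (∀ k : ℕ, S (Wm ρ k) = Wm ρ k) ∧ (∀ k : ℕ, S (Wp ρ k) = Wp ρ k) ∧
      (∀ k : ℕ, S (G ρ k) = Gt ρ k) ∧ (∀ k : ℕ, S (Gt ρ k) = G ρ k)) :=
  statement2_general ρ

end Alt
end
end

section
/- The following identities hold in Ā⟦s,t⟧; they are the denominator-cleared component form of the non-standard classical Yang–Baxter algebra [B₁(u), B₂(v)] = [r̄₂₁(v,u), B₁(u)] + [B₂(v), r̄₁₂(u,v)] satisfied by the B-matrix of the paper, giving an FRT presentation of Ā: (a) (s−t)·[w₊(t), w₋(s)] = (s·t/2)·( g₊(t) − g₋(t) + g₋(s) − g₊(s) ), together with the same identity with + and − interchanged; (b) (s−t)·[g₊(t), w₊(s)] = 16·( s·w₊(t) − t·w₊(s) ); (s−t)·[g₊(t), w₋(s)] = −16·( s·w₋(t) − t·w₋(s)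 ); (s−t)·[g₋(t), w₊(s)] = −16·( s·w₊(t) − t·w₊(s) ); (s−t)·[g₋(t), w₋(s)] = 16·( s·w₋(t) − t·w₋(s) ); (c) [g₊(t), g₋(s)] = 0; (d) [w₊(t), w₊(s)] = 0, [w₋(t), w₋(s)] = 0, [g₊(t), g₊(s)] = 0, [g₋(t), g₋(s)] = 0. -/
/-!
All identities are compared coefficientwise. The coefficient of `t^(m+1) s^(n+1)` in
`[F(t), G(s)]` is the bracket of the `m`-th coefficient of `F` with the `n`-th one of `G`, and for
each pair in the statement the relations of `Ā` make it a function of `m + n` alone (for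
`[g_{k+1}, g̃_{l+1}]`, which vanishes, through the Jacobi identity). Multiplying
`Σ ψ(m+n) t^(m+1) s^(n+1)` by `s - t` telescopes along the antidiagonals and leaves
`s t (Ψ(s) - Ψ(t))` with `Ψ(x) = Σ ψ(k) x^(k+1)`; likewise `Σ φ(m+n+1) t^(m+1) s^(n+1)` gives
`t Φ(s) - s Φ(t)`.
-/

noncomputable section

namespace AltCl

variable (K : Type) [Field K] [CharZero K]

/-- Commutator `[x,y] = xy - yx`. -/
def br {A : Type*} [Ring A] (x y : A) : A := x * y - y * x

/-- Generators: `wm k ↦ w_{-k}`, `wp k ↦ w_{k+1}`, `g k ↦ g_{k+1}`, `gt k ↦ g̃_{k+1}`. -/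
inductive Gen : Type
  | wm : ℕ → Gen
  | wp : ℕ → Gen
  | g : ℕ → Gen
  | gt : ℕ → Gen

/-- Abbreviation in the free algebra. -/
def fg (x : Gen) : FreeAlgebra K Gen := FreeAlgebra.ι K x

/-- The defining relations of the algebra `Ā`. -/
inductive relA : FreeAlgebra K Gen → FreeAlgebra K Gen → Prop
  | a1 (k l : ℕ) : relA (br (fg K (.wm l)) (fg K (.wp k)))
      ((2⁻¹ : K) • (fg K (.gt (k + l)) - fg K (.g (k + l))))
  | a2a (k l : ℕ) : relA (br (fg K (.gt k)) (fg K (.wm l)))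
      ((16 : K) • fg K (.wm (k + l + 1)))
  | a2b (k l : ℕ) : relA (br (fg K (.wm l)) (fg K (.g k)))
      ((16 : K) • fg K (.wm (k + l + 1)))
  | a3a (k l : ℕ) : relA (br (fg K (.wp l)) (fg K (.gt k)))
      ((16 : K) • fg K (.wp (k + l + 1)))
  | a3b (k l : ℕ) : relA (br (fg K (.g k)) (fg K (.wp l)))
      ((16 : K) • fg K (.wp (k + l + 1)))
  | a4a (k l : ℕ) : relA (br (fg K (.wm k)) (fg K (.wm l))) 0
  | a4b (k l : ℕ) : relA (br (fg K (.wp k)) (fg K (.wp l))) 0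
  | a4c (k l : ℕ) : relA (br (fg K (.g k)) (fg K (.g l))) 0
  | a4d (k l : ℕ) : relA (br (fg K (.gt k)) (fg K (.gt l))) 0

/-- The algebra `Ā`. -/
abbrev Abar : Type := RingQuot (relA K)

/-- `w_{-k}` in `Ā`. -/
def wm (k : ℕ) : Abar K := RingQuot.mkAlgHom K (relA K) (fg K (.wm k))
/-- `w_{k+1}` in `Ā`. -/
def wp (k : ℕ) : Abar K := RingQuot.mkAlgHom K (relA K) (fg K (.wp k))
/-- `g_{k+1}` in `Ā`. -/
def g (k : ℕ) : Abar K := RingQuot.mkAlgHom K (relA K) (fg K (.g k))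
/-- `g̃_{k+1}` in `Ā`. -/
def gt (k : ℕ) : Abar K := RingQuot.mkAlgHom K (relA K) (fg K (.gt k))

open scoped Classical

/-- The generating function `Σ_{k≥0} f k · x^{k+1}` in the variable `x_i`
(`i : Fin 2`; `i = 0` is `s`, `i = 1` is `t`), with coefficients in `Ā`. -/
def gfun (i : Fin 2) (f : ℕ → Abar K) : MvPowerSeries (Fin 2) (Abar K) :=
  fun d => if 1 ≤ d i ∧ d = Finsupp.single i (d i) then f (d i - 1) else 0

/-- `w₊` in the variable `x_i`. -/
def wps (i : Fin 2) : MvPowerSeries (Fin 2) (Abar K) := gfun K i (wm K)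
/-- `w₋` in the variable `x_i`. -/
def wms (i : Fin 2) : MvPowerSeries (Fin 2) (Abar K) := gfun K i (wp K)
/-- `g₊` in the variable `x_i`. -/
def gps (i : Fin 2) : MvPowerSeries (Fin 2) (Abar K) := gfun K i (g K)
/-- `g₋` in the variable `x_i`. -/
def gms (i : Fin 2) : MvPowerSeries (Fin 2) (Abar K) := gfun K i (gt K)

/-- The variable `s`. -/
def ps : MvPowerSeries (Fin 2) (Abar K) := MvPowerSeries.X 0
/-- The variable `t`. -/
def pt : MvPowerSeries (Fin 2) (Abar K) := MvPowerSeries.X 1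

end AltCl

namespace MvPowerSeries

open Finsupp

variable {σ A : Type*} [Ring A]

lemma coeff_X_mul (i : σ) (φ : MvPowerSeries σ A) (d : σ →₀ ℕ) :
    coeff d (X i * φ) = if 1 ≤ d i then coeff (d - single i 1) φ else 0 := by
  rw [X, coeff_monomial_mul, one_mul]
  simp only [single_le_iff]

end MvPowerSeries

namespace AltCl

section Bracket

variable {R A : Type*} [CommSemiring R] [Ring A] [Algebra R A]

lemma br_anticomm (x y : A) : br x y = -br y x := by
  simp only [br]; noncomm_ring

lemma br_neg_left (x y : A) : br (-x) y = -br x y := by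
  simp only [br]; noncomm_ring

lemma br_sub_right (x y z : A) : br x (y - z) = br x y - br x z := by
  simp only [br]; noncomm_ring

lemma br_br (x y z : A) : br x (br y z) = br (br x y) z + br y (br x z) := by
  simp only [br]; noncomm_ring

lemma br_smul_left (c : R) (x y : A) : br (c • x) y = c • br x y := by
  simp only [br, smul_mul_assoc, mul_smul_comm, smul_sub]

lemma br_smul_right (c : R) (x y : A) : br x (c • y) = c • br x y := by
  simp only [br, smul_mul_assoc, mul_smul_comm, smul_sub]

end Bracket

section Relations

variable {K : Type} [Field K]

lemma wm_br_wp (k l : ℕ) : br (wm K l) (wp K k) = (2⁻¹ : K) • (gt K (k + l) - g K (k + l)) := by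
  simpa [br, wm, wp, g, gt] using RingQuot.mkAlgHom_rel K (relA.a1 (K := K) k l)

lemma gt_br_wm (k l : ℕ) : br (gt K k) (wm K l) = (16 : K) • wm K (k + l + 1) := by
  simpa [br, wm, gt] using RingQuot.mkAlgHom_rel K (relA.a2a (K := K) k l)

lemma wm_br_g (k l : ℕ) : br (wm K l) (g K k) = (16 : K) • wm K (k + l + 1) := by
  simpa [br, wm, g] using RingQuot.mkAlgHom_rel K (relA.a2b (K := K) k l)

lemma wp_br_gt (k l : ℕ) : br (wp K l) (gt K k) = (16 : K) • wp K (k + l + 1) := by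
  simpa [br, wp, gt] using RingQuot.mkAlgHom_rel K (relA.a3a (K := K) k l)

lemma g_br_wp (k l : ℕ) : br (g K k) (wp K l) = (16 : K) • wp K (k + l + 1) := by
  simpa [br, wp, g] using RingQuot.mkAlgHom_rel K (relA.a3b (K := K) k l)

lemma wm_br_wm (k l : ℕ) : br (wm K k) (wm K l) = 0 := by
  simpa [br, wm] using RingQuot.mkAlgHom_rel K (relA.a4a (K := K) k l)

lemma wp_br_wp (k l : ℕ) : br (wp K k) (wp K l) = 0 := by
  simpa [br, wp] using RingQuot.mkAlgHom_rel K (relA.a4b (K := K) k l)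

lemma g_br_g (k l : ℕ) : br (g K k) (g K l) = 0 := by
  simpa [br, g] using RingQuot.mkAlgHom_rel K (relA.a4c (K := K) k l)

lemma gt_br_gt (k l : ℕ) : br (gt K k) (gt K l) = 0 := by
  simpa [br, gt] using RingQuot.mkAlgHom_rel K (relA.a4d (K := K) k l)

/-- `g̃_{l+1} - g_{l+1} = 2 [w_0, w_{l+1}]`, and the Jacobi identity turns
`[g_{k+1}, [w_0, w_{l+1}]]` into `-16 [w_{-k-1}, w_{l+1}] + 16 [w_0, w_{k+l+2}]`, whose two
brackets are both `(g̃_{k+l+2} - g_{k+l+2}) / 2`. -/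
lemma g_br_gt [CharZero K] (k l : ℕ) : br (g K k) (gt K l) = 0 := by
  have gt_sub_g : gt K l - g K l = (2 : K) • br (wm K 0) (wp K l) := by
    rw [wm_br_wp, smul_smul]; norm_num
  calc br (g K k) (gt K l) = br (g K k) (gt K l - g K l) := by
        rw [br_sub_right, g_br_g, sub_zero]
    _ = (2 : K) • (br (br (g K k) (wm K 0)) (wp K l) + br (wm K 0) (br (g K k) (wp K l))) := by
      rw [gt_sub_g, br_smul_right, br_br]
    _ = 0 := by
      rw [br_anticomm (g K k), wm_br_g, g_br_wp, br_neg_left, br_smul_left, br_smul_right,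
        wm_br_wp, wm_br_wp, add_zero, ← add_assoc, add_comm l k, neg_add_cancel, smul_zero]

end Relations

section GeneratingFunctions

open MvPowerSeries Finsupp

variable {K : Type} [Field K]

lemma fin_two_eq_or_eq {i j : Fin 2} (hij : i ≠ j) (x : Fin 2) : x = i ∨ x = j := by
  revert i j x; decide

lemma single_add_single_eq {i j : Fin 2} (hij : i ≠ j) (d : Fin 2 →₀ ℕ) :
    single i (d i) + single j (d j) = d := by
  ext x
  rcases fin_two_eq_or_eq hij x with rfl | rfl <;> simp [hij, hij.symm]

lemma eq_single_iff_eq_zero {i j : Fin 2} (hij : i ≠ j) (d : Fin 2 →₀ ℕ) :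
    d = single i (d i) ↔ d j = 0 := by
  rw [← single_add_single_eq hij d]
  simp [hij, hij.symm]

lemma coeff_gfun {i j : Fin 2} (hij : i ≠ j) (f : ℕ → Abar K) (d : Fin 2 →₀ ℕ) :
    coeff d (gfun K i f) = if 1 ≤ d i ∧ d j = 0 then f (d i - 1) else 0 := by
  simp only [coeff_apply, gfun, eq_single_iff_eq_zero hij]

lemma coeff_gfun_mul_gfun {i j : Fin 2} (hij : i ≠ j) (f h : ℕ → Abar K) (d : Fin 2 →₀ ℕ) :
    coeff d (gfun K i f * gfun K j h) =
      if 1 ≤ d i ∧ 1 ≤ d j then f (d i - 1) * h (d j - 1) else 0 := by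
  rw [coeff_mul, Finset.sum_eq_single_of_mem (single i (d i), single j (d j))
    (Finset.HasAntidiagonal.mem_antidiagonal.mpr (single_add_single_eq hij d))]
  · simp only [coeff_gfun hij, coeff_gfun hij.symm, single_eq_same, single_eq_of_ne' hij,
      single_eq_of_ne' hij.symm, and_true, ite_zero_mul_ite_zero]
  · rintro ⟨p, q⟩ hpq hne
    rw [Finset.HasAntidiagonal.mem_antidiagonal] at hpq
    rw [coeff_gfun hij, coeff_gfun hij.symm]
    split_ifs with hp hq <;> simp only [mul_zero, zero_mul]
    refine absurd (Prod.ext ?_ ?_) hne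
    · have hpi : p i = d i := by rw [← hpq, Finsupp.add_apply, hq.2, add_zero]
      rw [← hpi]
      exact (eq_single_iff_eq_zero hij p).mpr hp.2
    · have hqj : q j = d j := by rw [← hpq, Finsupp.add_apply, hp.2, zero_add]
      rw [← hqj]
      exact (eq_single_iff_eq_zero hij.symm q).mpr hq.2

lemma coeff_br_gfun {i j : Fin 2} (hij : i ≠ j) (f h : ℕ → Abar K) (d : Fin 2 →₀ ℕ) :
    coeff d (br (gfun K i f) (gfun K j h)) =
      if 1 ≤ d i ∧ 1 ≤ d j then br (f (d i - 1)) (h (d j - 1)) else 0 := by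
  simp only [br, map_sub, coeff_gfun_mul_gfun hij, coeff_gfun_mul_gfun hij.symm,
    and_comm (a := 1 ≤ d j), ite_sub_ite, sub_zero]

lemma gfun_smul (i : Fin 2) (c : K) (f : ℕ → Abar K) : gfun K i (c • f) = c • gfun K i f := by
  funext d
  show gfun K i (c • f) d = c • gfun K i f d
  simp only [gfun, Pi.smul_apply, smul_ite, smul_zero]

lemma gfun_sub (i : Fin 2) (f h : ℕ → Abar K) : gfun K i (f - h) = gfun K i f - gfun K i h := by
  funext d
  show gfun K i (f - h) d = gfun K i f d - gfun K i h d
  simp only [gfun, Pi.sub_apply, ite_sub_ite, sub_zero]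

lemma br_gfun_eq_zero {f h : ℕ → Abar K} (hfh : ∀ m n, br (f m) (h n) = 0) :
    br (gfun K 1 f) (gfun K 0 h) = 0 := by
  ext d
  rw [coeff_br_gfun one_ne_zero, coeff_zero, hfh, ite_self]

lemma sub_mul_br_gfun_of_br_eq_add {f h φ : ℕ → Abar K}
    (hfh : ∀ m n, br (f m) (h n) = φ (m + n)) :
    (ps K - pt K) * br (gfun K 1 f) (gfun K 0 h) = ps K * pt K * (gfun K 0 φ - gfun K 1 φ) := by
  ext d
  simp only [ps, pt, sub_mul, mul_assoc, map_sub, coeff_X_mul, coeff_br_gfun one_ne_zero,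
    coeff_gfun one_ne_zero, coeff_gfun zero_ne_one, tsub_apply,
    single_eq_same, single_eq_of_ne one_ne_zero, single_eq_of_ne zero_ne_one]
  generalize d 0 = a, d 1 = b
  rcases a with _ | _ | a <;> rcases b with _ | _ | b <;> simp [hfh, add_comm, add_left_comm]

lemma sub_mul_br_gfun_of_br_eq_add_one {f h φ : ℕ → Abar K}
    (hfh : ∀ m n, br (f m) (h n) = φ (m + n + 1)) :
    (ps K - pt K) * br (gfun K 1 f) (gfun K 0 h) = pt K * gfun K 0 φ - ps K * gfun K 1 φ := by
  ext d
  simp only [ps, pt, sub_mul, map_sub, coeff_X_mul, coeff_br_gfun one_ne_zero,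
    coeff_gfun one_ne_zero, coeff_gfun zero_ne_one, tsub_apply,
    single_eq_same, single_eq_of_ne one_ne_zero, single_eq_of_ne zero_ne_one]
  generalize d 0 = a, d 1 = b
  rcases a with _ | _ | a <;> rcases b with _ | _ | b <;> simp [hfh, add_comm, add_left_comm]

lemma sub_mul_br_gfun_of_br_eq_smul_add {f h φ : ℕ → Abar K} (c : K)
    (hfh : ∀ m n, br (f m) (h n) = c • φ (m + n)) :
    (ps K - pt K) * br (gfun K 1 f) (gfun K 0 h) =
      c • (ps K * pt K * (gfun K 0 φ - gfun K 1 φ)) := by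
  rw [sub_mul_br_gfun_of_br_eq_add (φ := c • φ) hfh, gfun_smul, gfun_smul, ← smul_sub,
    mul_smul_comm]

lemma sub_mul_br_gfun_of_br_eq_smul_add_one {f h φ : ℕ → Abar K} (c : K)
    (hfh : ∀ m n, br (f m) (h n) = c • φ (m + n + 1)) :
    (ps K - pt K) * br (gfun K 1 f) (gfun K 0 h) =
      c • (pt K * gfun K 0 φ - ps K * gfun K 1 φ) := by
  rw [sub_mul_br_gfun_of_br_eq_add_one (φ := c • φ) hfh, gfun_smul, gfun_smul, mul_smul_comm,
    mul_smul_comm, smul_sub]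

end GeneratingFunctions

variable (K : Type) [Field K] [CharZero K]

/-- The denominator-cleared component form, in `Ā⟦s,t⟧`, of the non-standard
classical Yang-Baxter algebra satisfied by the `B`-matrix of the paper. -/
theorem statement13 :
    -- (a)
    ((ps K - pt K) * br (wps K 1) (wms K 0) =
        (2⁻¹ : K) • (ps K * pt K * (gps K 1 - gms K 1 + gms K 0 - gps K 0)) ∧
     (ps K - pt K) * br (wms K 1) (wps K 0) =
        (2⁻¹ : K) • (ps K * pt K * (gms K 1 - gps K 1 + gps K 0 - gms K 0))) ∧
    -- (b)
    ((ps K - pt K) * br (gps K 1) (wps K 0) =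
        (16 : K) • (ps K * wps K 1 - pt K * wps K 0) ∧
     (ps K - pt K) * br (gps K 1) (wms K 0) =
        -((16 : K) • (ps K * wms K 1 - pt K * wms K 0)) ∧
     (ps K - pt K) * br (gms K 1) (wps K 0) =
        -((16 : K) • (ps K * wps K 1 - pt K * wps K 0)) ∧
     (ps K - pt K) * br (gms K 1) (wms K 0) =
        (16 : K) • (ps K * wms K 1 - pt K * wms K 0)) ∧
    -- (c)
    (br (gps K 1) (gms K 0) = 0) ∧
    -- (d)
    (br (wps K 1) (wps K 0) = 0 ∧ br (wms K 1) (wms K 0) = 0 ∧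
     br (gps K 1) (gps K 0) = 0 ∧ br (gms K 1) (gms K 0) = 0) := by
  refine ⟨⟨?_, ?_⟩, ⟨?_, ?_, ?_, ?_⟩, br_gfun_eq_zero g_br_gt, br_gfun_eq_zero wm_br_wm,
    br_gfun_eq_zero wp_br_wp, br_gfun_eq_zero g_br_g, br_gfun_eq_zero gt_br_gt⟩ <;>
    simp only [wps, wms, gps, gms]
  · rw [sub_mul_br_gfun_of_br_eq_smul_add (φ := gt K - g K) 2⁻¹
      (fun m n => by rw [wm_br_wp, add_comm]; rfl), gfun_sub, gfun_sub]
    congr 2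
    abel
  · rw [sub_mul_br_gfun_of_br_eq_smul_add (φ := gt K - g K) (-2⁻¹)
      (fun m n => by rw [br_anticomm, wm_br_wp]; exact (neg_smul (2⁻¹ : K) _).symm),
      gfun_sub, gfun_sub, neg_smul, ← smul_neg]
    congr 1
    simp only [mul_sub, mul_add]
    abel
  · rw [sub_mul_br_gfun_of_br_eq_smul_add_one (φ := wm K) (-16)
      (fun m n => by rw [br_anticomm, wm_br_g]; exact (neg_smul (16 : K) _).symm),
      neg_smul, ← smul_neg, neg_sub]
  · rw [sub_mul_br_gfun_of_br_eq_smul_add_one 16 g_br_wp, ← smul_neg, neg_sub]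
  · rw [sub_mul_br_gfun_of_br_eq_smul_add_one 16 gt_br_wm, ← smul_neg, neg_sub]
  · rw [sub_mul_br_gfun_of_br_eq_smul_add_one (φ := wp K) (-16)
      (fun m n => by rw [br_anticomm, wp_br_gt]; exact (neg_smul (16 : K) _).symm),
      neg_smul, ← smul_neg, neg_sub]

end AltCl
end
end
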